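/- Let r1, r2, a1, a2, b1, b2 be positive real numbers with a1·a2 - b1·b2 > 0 and b1/a2 < r1/r2 < a1/b2, let u*, v* be the (positive) coexistence state, set α = (2·b2·u* - r2)·v*, and suppose α > 0 and d12 > 0. Then there exists d0 > 0 such that for every d with 0 < d < d0 there exists λ > 0 with det(J* - λ·J_Δ*) < 0; i.e., for sufficiently small common diffusion the cross-diffusion term destabilizes the homogeneous coexistence state (Turing instability). -/

import Mathlib

/-!
At `d = 0` the determinant is affine in `λ`: it equals `(a1 a2 - b1 b2) u* v* - d12 α λ`, because
the coexistence equation `b2 u* + a2 v* = r2` turns `α` into `(b2 u* - a2 v*) v*`. As `d12 α > 0`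
it is negative for some large `λ`, and for that fixed `λ` the determinant depends continuously
on `d`, so it stays negative for all small `d`.
-/

open Filter Topology

theorem exists_pos_forall_exists_neg_of_tendsto_atBot {f : ℝ → ℝ → ℝ}
    (hcont : ∀ lam, ContinuousAt (fun d => f d lam) 0) (hf0 : Tendsto (f 0) atTop atBot) :
    ∃ d0 : ℝ, 0 < d0 ∧ ∀ d : ℝ, 0 < d → d < d0 → ∃ lam : ℝ, 0 < lam ∧ f d lam < 0 := by
  obtain ⟨lam, hlam, hneg⟩ :=
    ((eventually_gt_atTop 0).and (hf0.eventually (eventually_lt_atBot 0))).exists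
  obtain ⟨d0, hd0, hball⟩ :=
    Metric.eventually_nhds_iff.1 ((hcont lam).eventually (gt_mem_nhds hneg))
  refine ⟨d0, hd0, fun d hd hdd => ⟨lam, hlam, hball ?_⟩⟩
  rwa [Real.dist_0_eq_abs, abs_of_pos hd]

theorem tendsto_const_sub_mul_atBot {c β : ℝ} (hβ : 0 < β) :
    Tendsto (fun lam : ℝ => c - β * lam) atTop atBot := by
  simp_rw [sub_eq_add_neg, ← neg_mul]
  exact tendsto_atBot_add_const_left _ c (tendsto_id.const_mul_atTop_of_neg (neg_neg_of_pos hβ))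

theorem coexistence_second_eq {r1 r2 a1 a2 b1 b2 u v : ℝ} (hD : a1 * a2 - b1 * b2 ≠ 0)
    (hu : u = (r1 * a2 - r2 * b1) / (a1 * a2 - b1 * b2))
    (hv : v = (r2 * a1 - r1 * b2) / (a1 * a2 - b1 * b2)) :
    b2 * u + a2 * v = r2 := by
  rw [hu, hv, mul_div_assoc', mul_div_assoc', ← add_div, div_eq_iff hD]
  ring

theorem det_characteristic_matrix (a1 a2 b1 b2 u v d d12 lam : ℝ) :
    Matrix.det (!![-(a1 * u), -(b1 * u); -(b2 * v), -(a2 * v)] -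
        lam • !![d + d12 * v, d12 * u; 0, d]) =
      d * (d + d12 * v) * lam ^ 2 + (d * (a1 * u + a2 * v) - d12 * ((b2 * u - a2 * v) * v)) * lam
        + (a1 * a2 - b1 * b2) * u * v := by
  simp only [Matrix.det_fin_two, Matrix.sub_apply, Matrix.smul_apply, smul_eq_mul, Matrix.of_apply,
    Matrix.cons_val', Matrix.cons_val_zero, Matrix.cons_val_one, Matrix.cons_val_fin_one]
  ring

theorem skt_turing_instability_small_diffusion_general
    (r1 r2 a1 a2 b1 b2 : ℝ)
    (hweak : a1 * a2 - b1 * b2 > 0)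
    (ustar vstar : ℝ)
    (hu : ustar = (r1 * a2 - r2 * b1) / (a1 * a2 - b1 * b2))
    (hv : vstar = (r2 * a1 - r1 * b2) / (a1 * a2 - b1 * b2))
    (α : ℝ) (hα : α = (2 * b2 * ustar - r2) * vstar) (hαpos : 0 < α)
    (d12 : ℝ) (hd12 : 0 < d12)
    (J : Matrix (Fin 2) (Fin 2) ℝ)
    (hJ : J = !![-(a1 * ustar), -(b1 * ustar); -(b2 * vstar), -(a2 * vstar)])
    (JΔ : ℝ → Matrix (Fin 2) (Fin 2) ℝ)
    (hJΔ : ∀ d : ℝ, JΔ d = !![d + d12 * vstar, d12 * ustar; 0, d]) :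
    ∃ d0 : ℝ, 0 < d0 ∧ ∀ d : ℝ, 0 < d → d < d0 →
      ∃ lam : ℝ, 0 < lam ∧ Matrix.det (J - lam • JΔ d) < 0 := by
  have hα' : α = (b2 * ustar - a2 * vstar) * vstar := by
    rw [hα, ← coexistence_second_eq hweak.ne' hu hv]
    ring
  simp only [hJ, hJΔ, det_characteristic_matrix, ← hα']
  apply exists_pos_forall_exists_neg_of_tendsto_atBot
  · intro lam
    fun_prop
  · convert tendsto_const_sub_mul_atBot (c := (a1 * a2 - b1 * b2) * ustar * vstar)
      (mul_pos hd12 hαpos) using 2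
    ring

/-- Turing instability by cross-diffusion: if `α > 0` and `d12 > 0`, then for all
sufficiently small common diffusion `d > 0` there is a Laplacian eigenvalue `λ > 0`
at which the determinant of the characteristic matrix is negative. -/
theorem skt_turing_instability_small_diffusion
    (r1 r2 a1 a2 b1 b2 : ℝ)
    (hr1 : 0 < r1) (hr2 : 0 < r2) (ha1 : 0 < a1) (ha2 : 0 < a2)
    (hb1 : 0 < b1) (hb2 : 0 < b2)
    (hweak : a1 * a2 - b1 * b2 > 0)
    (hlow : b1 / a2 < r1 / r2) (hhigh : r1 / r2 < a1 / b2)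
    (ustar vstar : ℝ)
    (hu : ustar = (r1 * a2 - r2 * b1) / (a1 * a2 - b1 * b2))
    (hv : vstar = (r2 * a1 - r1 * b2) / (a1 * a2 - b1 * b2))
    (α : ℝ) (hα : α = (2 * b2 * ustar - r2) * vstar) (hαpos : 0 < α)
    (d12 : ℝ) (hd12 : 0 < d12)
    (J : Matrix (Fin 2) (Fin 2) ℝ)
    (hJ : J = !![-(a1 * ustar), -(b1 * ustar); -(b2 * vstar), -(a2 * vstar)])
    (JΔ : ℝ → Matrix (Fin 2) (Fin 2) ℝ)
    (hJΔ : ∀ d : ℝ, JΔ d = !![d + d12 * vstar, d12 * ustar; 0, d]) :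
    ∃ d0 : ℝ, 0 < d0 ∧ ∀ d : ℝ, 0 < d → d < d0 →
      ∃ lam : ℝ, 0 < lam ∧ Matrix.det (J - lam • JΔ d) < 0 :=
  skt_turing_instability_small_diffusion_general r1 r2 a1 a2 b1 b2 hweak ustar vstar hu hv α hα
    hαpos d12 hd12 J hJ JΔ hJΔ
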